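/- For a string ω ∈ {0,1}^n with ω_1 = 0 and ω_n = 1, let S_k = Σ_{i=1}^k (1 - 2ω_i) be the associated ±1 walk. Then the stabilization time T(ω) (the minimal number of applications of E needed to reach a stable string) equals n/2 + max_{1 ≤ k ≤ n} S_k - S_n/2 - 1. -/

import Mathlib

/-!
Read `ω` as the walk `S`, a zero being an up-step and a one a down-step: one application of
`evolve` turns every peak of `S` into a valley. Give a zero at position `k` that still has a one
to its right the weight (zeros left of `k`) + (ones right of `k`) = `S (k+1) + U - 1`, where `U`
is the number of ones. The maximal weight drops by exactly one at each step (no weight grows,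
and a leftmost maximiser is replaced by a zero one place to its left or right of weight one
less), and it vanishes exactly on stable strings; hence it is the stabilization time. When `ω`
starts with 0 and ends with 1, the maximum of `S` over `[1, n]` is attained just after such a
zero, so the maximal weight is `max S + U - 1`, and `U = (n - S n) / 2`.
-/

open Finset

/-- The k-th bit of a string of length `n`, padded with `false` out of range. -/
def bit (n : ℕ) (ω : Fin n → Bool) (k : ℕ) : Bool :=
  if h : k < n then ω ⟨k, h⟩ else false

/-- One step of the evolution: every occurrence of "01" is replaced by "10"
(simultaneously).  `E(ω)_i = 1` iff `(ω_i = 1 ∧ ¬(i ≥ 2 ∧ ω_{i-1} = 0)) ∨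
(ω_i = 0 ∧ i < n ∧ ω_{i+1} = 1)` (1-indexed; here 0-indexed). -/
def evolve (n : ℕ) (ω : Fin n → Bool) : Fin n → Bool :=
  fun i =>
    (bit n ω i.val && !(decide (0 < i.val) && !bit n ω (i.val - 1)))
      || (!bit n ω i.val && bit n ω (i.val + 1))

/-- A string is stable iff it contains no occurrence of "01". -/
def IsStable (n : ℕ) (ω : Fin n → Bool) : Prop :=
  ∀ k : ℕ, ¬(bit n ω k = false ∧ bit n ω (k + 1) = true)

/-- The stabilization time: the least number of applications of `evolve`
after which the string is stable. -/
noncomputable def stabTime (n : ℕ) (ω : Fin n → Bool) : ℕ :=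
  sInf {m : ℕ | IsStable n ((evolve n)^[m] ω)}

/-- The ±1 walk associated with a string: `S_k = Σ_{i=1}^k (1 - 2 ω_i)`. -/
def walk (n : ℕ) (ω : Fin n → Bool) (k : ℕ) : ℤ :=
  ∑ i ∈ Finset.range k, (1 - 2 * (if bit n ω i then 1 else 0) : ℤ)

section

variable {n : ℕ} {ω : Fin n → Bool}

def countOnes (n : ℕ) (ω : Fin n → Bool) (t : ℕ) : ℕ :=
  ∑ i ∈ range t, if bit n ω i then 1 else 0

@[simp]
lemma countOnes_zero : countOnes n ω 0 = 0 := by simp [countOnes]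

lemma countOnes_succ (t : ℕ) :
    countOnes n ω (t + 1) = countOnes n ω t + if bit n ω t then 1 else 0 :=
  sum_range_succ _ _

lemma countOnes_le_self (t : ℕ) : countOnes n ω t ≤ t := by
  induction t with
  | zero => simp
  | succ t ih => rw [countOnes_succ]; split <;> omega

lemma countOnes_mono : Monotone (countOnes n ω) :=
  fun _ _ h => sum_le_sum_of_subset (range_mono h)

lemma bit_of_le {k : ℕ} (h : n ≤ k) : bit n ω k = false := by
  simp [bit, Nat.not_lt.mpr h]

lemma countOnes_of_le {t : ℕ} (h : n ≤ t) : countOnes n ω t = countOnes n ω n := by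
  induction t, h using Nat.le_induction with
  | base => rfl
  | succ t ht ih => simp [countOnes_succ, ih, bit_of_le ht]

lemma walk_eq_sub_countOnes (t : ℕ) : walk n ω t = t - 2 * countOnes n ω t := by
  induction t with
  | zero => simp [walk]
  | succ t ih =>
    rw [walk, sum_range_succ, ← walk, ih, countOnes_succ]
    split <;> push_cast <;> ring

def IsSwapSite (n : ℕ) (ω : Fin n → Bool) (t : ℕ) : Prop :=
  bit n ω t = false ∧ bit n ω (t + 1) = true

instance (t : ℕ) : Decidable (IsSwapSite n ω t) := instDecidableAnd

lemma bit_evolve (t : ℕ) :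
    bit n (evolve n ω) t =
      ((bit n ω t && !(decide (0 < t) && !bit n ω (t - 1)))
        || (!bit n ω t && bit n ω (t + 1))) := by
  by_cases h : t < n
  · exact dif_pos h
  · simp [bit_of_le (n := n) (not_lt.mp h), bit_of_le (n := n) (by omega : n ≤ t + 1)]

lemma countOnes_evolve_succ (t : ℕ) :
    countOnes n (evolve n ω) (t + 1) =
      countOnes n ω (t + 1) + if IsSwapSite n ω t then 1 else 0 := by
  induction t with
  | zero =>
    simp only [countOnes_succ, countOnes_zero, bit_evolve]
    rcases Bool.eq_false_or_eq_true (bit n ω 0) with h₀ | h₀ <;>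
      rcases Bool.eq_false_or_eq_true (bit n ω 1) with h₁ | h₁ <;> simp [IsSwapSite, h₀, h₁]
  | succ t ih =>
    rw [countOnes_succ, ih, countOnes_succ (t := t + 1), bit_evolve]
    simp only [show decide (0 < t + 1) = true by simp, Nat.add_sub_cancel]
    rcases Bool.eq_false_or_eq_true (bit n ω t) with h₀ | h₀ <;>
      rcases Bool.eq_false_or_eq_true (bit n ω (t + 1)) with h₁ | h₁ <;>
      rcases Bool.eq_false_or_eq_true (bit n ω (t + 2)) with h₂ | h₂ <;>
      simp [IsSwapSite, h₀, h₁, h₂]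

lemma countOnes_evolve_self : countOnes n (evolve n ω) n = countOnes n ω n := by
  cases n with
  | zero => rfl
  | succ m => simp [countOnes_evolve_succ, IsSwapSite, bit_of_le]


lemma countOnes_le_countOnes_self (t : ℕ) : countOnes n ω t ≤ countOnes n ω n := by
  rcases le_total t n with h | h
  · exact countOnes_mono h
  · exact (countOnes_of_le h).le

lemma exists_isSwapSite_of_countOnes_lt {k t : ℕ} (hk : bit n ω k = false)
    (h : countOnes n ω (k + 1) < countOnes n ω t) : ∃ m, IsSwapSite n ω m := by
  induction t with
  | zero => simp at h
  | succ t ih =>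
    by_cases h' : countOnes n ω (k + 1) < countOnes n ω t
    · exact ih h'
    have hkt : k < t := by
      by_contra hkt
      have := countOnes_mono (ω := ω) (show t + 1 ≤ k + 1 by omega)
      omega
    have ht : bit n ω t = true := by
      by_contra ht
      have := countOnes_succ (ω := ω) t
      simp only [ht, ite_false, add_zero] at this
      omega
    refine ⟨t - 1, ?_, by rwa [Nat.sub_add_cancel (by omega)]⟩
    rcases Nat.lt_or_ge (t - 1) (k + 1) with hlt | hge
    · rwa [show t - 1 = k by omega]
    · have h₁ := countOnes_mono (ω := ω) hge
      have h₂ := countOnes_succ (ω := ω) (t - 1)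
      rw [Nat.sub_add_cancel (by omega)] at h₂
      by_contra hb
      rw [Bool.not_eq_false] at hb
      simp only [hb, ite_true] at h₂
      omega

lemma exists_bit_false_walk_le {b : ℕ} (h : countOnes n ω b < b) :
    ∃ q < b, bit n ω q = false ∧ walk n ω b ≤ walk n ω (q + 1) := by
  induction b with
  | zero => simp at h
  | succ b ih =>
    rcases Bool.eq_false_or_eq_true (bit n ω b) with hb | hb
    · rw [countOnes_succ, hb] at h
      obtain ⟨q, hqb, hq, hwalk⟩ := ih (by simpa using h)
      refine ⟨q, by omega, hq, le_trans ?_ hwalk⟩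
      simp only [walk_eq_sub_countOnes, countOnes_succ, hb]
      push_cast
      omega
    · exact ⟨b, by omega, hb, le_rfl⟩

def misplacedZeros (n : ℕ) (ω : Fin n → Bool) : Finset ℕ :=
  (range n).filter fun k => bit n ω k = false ∧ countOnes n ω (k + 1) < countOnes n ω n

def weight (n : ℕ) (ω : Fin n → Bool) (k : ℕ) : ℕ :=
  (k - countOnes n ω k) + (countOnes n ω n - countOnes n ω (k + 1))

def maxWeight (n : ℕ) (ω : Fin n → Bool) : ℕ :=
  (misplacedZeros n ω).sup (weight n ω)

lemma mem_misplacedZeros {k : ℕ} :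
    k ∈ misplacedZeros n ω ↔ bit n ω k = false ∧ countOnes n ω (k + 1) < countOnes n ω n := by
  simp only [misplacedZeros, mem_filter, mem_range, and_iff_right_iff_imp]
  intro ⟨_, h⟩
  by_contra hk
  rw [countOnes_of_le (by omega)] at h
  omega

lemma weight_add_two_mul_countOnes {k : ℕ} (hk : bit n ω k = false) :
    weight n ω k + 2 * countOnes n ω (k + 1) = k + countOnes n ω n := by
  have h₁ := countOnes_le_self (ω := ω) k
  have h₂ := countOnes_le_countOnes_self (ω := ω) (k + 1)
  simp only [weight, countOnes_succ, hk, Bool.false_eq_true, ite_false, add_zero] at h₂ ⊢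
  omega

lemma weight_eq_walk {k : ℕ} (hk : bit n ω k = false) :
    (weight n ω k : ℤ) = walk n ω (k + 1) + countOnes n ω n - 1 := by
  have h := weight_add_two_mul_countOnes hk
  rw [walk_eq_sub_countOnes]
  push_cast
  omega

lemma isStable_iff_maxWeight_eq_zero : IsStable n ω ↔ maxWeight n ω = 0 := by
  rw [maxWeight, ← bot_eq_zero, Finset.sup_eq_bot_iff]
  constructor
  · intro hs k hk
    obtain ⟨m, hm⟩ := exists_isSwapSite_of_countOnes_lt (mem_misplacedZeros.mp hk).1
      (mem_misplacedZeros.mp hk).2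
    exact absurd hm (hs m)
  · intro h k ⟨hk, hk₁⟩
    have hmem : k ∈ misplacedZeros n ω := by
      refine mem_misplacedZeros.mpr ⟨hk, ?_⟩
      have := countOnes_le_countOnes_self (ω := ω) (k + 2)
      simp only [countOnes_succ (t := k + 1), hk₁, ite_true] at this
      omega
    have := h k hmem
    rw [Nat.bot_eq_zero, weight] at this
    have := (mem_misplacedZeros.mp hmem).2
    omega


lemma exists_weight_gt_of_mem_evolve {k : ℕ} (hk : k ∈ misplacedZeros n (evolve n ω)) :
    ∃ q ∈ misplacedZeros n ω, weight n (evolve n ω) k < weight n ω q := by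
  obtain ⟨hbk, hck⟩ := mem_misplacedZeros.mp hk
  have hw' := weight_add_two_mul_countOnes hbk
  rw [countOnes_evolve_self] at hck hw'
  rw [bit_evolve] at hbk
  rcases Bool.eq_false_or_eq_true (bit n ω k) with h | h
  · cases k with
    | zero => simp [h] at hbk
    | succ m =>
      have hbm : bit n ω m = false := by simpa [h] using hbk
      have hE := countOnes_evolve_succ (ω := ω) (m + 1)
      have hc := countOnes_succ (ω := ω) (m + 1)
      simp only [IsSwapSite, h, Bool.true_eq_false, false_and, ite_true, ite_false,
        add_zero] at hE hc
      have hw := weight_add_two_mul_countOnes hbm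
      exact ⟨m, mem_misplacedZeros.mpr ⟨hbm, by omega⟩, by omega⟩
  · have hk₁ : bit n ω (k + 1) = false := by simpa [h] using hbk
    have hE := countOnes_evolve_succ (ω := ω) k
    have hc := countOnes_succ (ω := ω) (k + 1)
    simp only [IsSwapSite, hk₁, Bool.false_eq_true, and_false, ite_false, add_zero] at hE hc
    have hw := weight_add_two_mul_countOnes hk₁
    exact ⟨k + 1, mem_misplacedZeros.mpr ⟨hk₁, by omega⟩, by omega⟩

lemma bit_succ_eq_true_of_isMax {k : ℕ} (hk : k ∈ misplacedZeros n ω)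
    (hmax : ∀ q ∈ misplacedZeros n ω, weight n ω q ≤ weight n ω k) :
    bit n ω (k + 1) = true := by
  obtain ⟨hbk, hck⟩ := mem_misplacedZeros.mp hk
  by_contra h
  rw [Bool.not_eq_true] at h
  have hc := countOnes_succ (ω := ω) (k + 1)
  simp only [h, Bool.false_eq_true, ite_false, add_zero] at hc
  have := hmax (k + 1) (mem_misplacedZeros.mpr ⟨h, by omega⟩)
  have := weight_add_two_mul_countOnes h
  have := weight_add_two_mul_countOnes hbk
  omega

/-- Otherwise the walk, which is the weight up to a constant, comes back to the same height
further left. -/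
lemma bit_pred_eq_false_of_isLeftmostMax {k : ℕ} (hk : k ∈ misplacedZeros n ω)
    (hleft : ∀ q ∈ misplacedZeros n ω, q < k → weight n ω q < weight n ω k)
    (hz : countOnes n ω k < k) : bit n ω (k - 1) = false := by
  obtain ⟨hbk, hck⟩ := mem_misplacedZeros.mp hk
  by_contra h
  rw [Bool.not_eq_false] at h
  have hc := countOnes_succ (ω := ω) (k - 1)
  have hc' := countOnes_succ (ω := ω) k
  rw [Nat.sub_add_cancel (by omega)] at hc
  simp only [h, hbk, ite_true, Bool.false_eq_true, ite_false, add_zero] at hc hc'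
  obtain ⟨q, hqk, hbq, hwalk⟩ := exists_bit_false_walk_le (ω := ω) (b := k - 1) (by omega)
  have hcq := countOnes_mono (ω := ω) (show q + 1 ≤ k - 1 by omega)
  have hq : q ∈ misplacedZeros n ω := mem_misplacedZeros.mpr ⟨hbq, by omega⟩
  have := hleft q hq (by omega)
  have hwq := weight_eq_walk hbq
  have hwk := weight_eq_walk hbk
  simp only [walk_eq_sub_countOnes] at hwalk hwk hwq
  push_cast [Nat.cast_sub (show 1 ≤ k by omega)] at hwalk hwk hwq
  omega

lemma exists_mem_evolve_weight_ge {k : ℕ} (hk : k ∈ misplacedZeros n ω)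
    (hmax : ∀ q ∈ misplacedZeros n ω, weight n ω q ≤ weight n ω k)
    (hleft : ∀ q ∈ misplacedZeros n ω, q < k → weight n ω q < weight n ω k)
    (h2 : 2 ≤ weight n ω k) :
    ∃ k' ∈ misplacedZeros n (evolve n ω), weight n ω k ≤ weight n (evolve n ω) k' + 1 := by
  obtain ⟨hbk, hck⟩ := mem_misplacedZeros.mp hk
  have hk₁ := bit_succ_eq_true_of_isMax hk hmax
  have hw := weight_add_two_mul_countOnes hbk
  have hc₀ := countOnes_succ (ω := ω) k
  have hc₁ := countOnes_succ (ω := ω) (k + 1)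
  simp only [hbk, hk₁, Bool.false_eq_true, ite_true, ite_false, add_zero] at hc₀ hc₁
  by_cases hlast : countOnes n ω (k + 1 + 1) < countOnes n ω n
  · have hb' : bit n (evolve n ω) (k + 1) = false := by simp [bit_evolve, hbk, hk₁]
    have hE₀ := countOnes_evolve_succ (ω := ω) k
    have hE₁ := countOnes_evolve_succ (ω := ω) (k + 1)
    simp only [IsSwapSite, hbk, hk₁, Bool.true_eq_false, false_and, and_self, ite_true,
      ite_false, add_zero] at hE₀ hE₁
    have hw' := weight_add_two_mul_countOnes hb'
    rw [countOnes_evolve_self] at hw'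
    exact ⟨k + 1, mem_misplacedZeros.mpr ⟨hb', by rw [countOnes_evolve_self]; omega⟩, by omega⟩
  · have hU := countOnes_le_countOnes_self (ω := ω) (k + 1 + 1)
    have hbm := bit_pred_eq_false_of_isLeftmostMax hk hleft (by omega)
    obtain ⟨m, rfl⟩ : ∃ m, k = m + 1 := ⟨k - 1, by omega⟩
    have hb' : bit n (evolve n ω) m = false := by simp_all [bit_evolve]
    have hE := countOnes_evolve_succ (ω := ω) m
    simp only [IsSwapSite, hbk, Bool.false_eq_true, and_false, ite_false, add_zero] at hE
    have hw' := weight_add_two_mul_countOnes hb'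
    rw [countOnes_evolve_self] at hw'
    exact ⟨m, mem_misplacedZeros.mpr ⟨hb', by rw [countOnes_evolve_self]; omega⟩, by omega⟩


lemma maxWeight_evolve : maxWeight n (evolve n ω) = maxWeight n ω - 1 := by
  have hle : ∀ q ∈ misplacedZeros n ω, weight n ω q ≤ maxWeight n ω := fun _ hq => le_sup hq
  apply le_antisymm
  · refine Finset.sup_le fun k hk => ?_
    obtain ⟨q, hq, hlt⟩ := exists_weight_gt_of_mem_evolve hk
    have := hle q hq
    omega
  · rcases Nat.lt_or_ge (maxWeight n ω) 2 with h | h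
    · omega
    have hne : (misplacedZeros n ω).Nonempty := by
      rw [nonempty_iff_ne_empty]
      rintro hempty
      simp [maxWeight, hempty] at h
    have hex : ∃ k, k ∈ misplacedZeros n ω ∧ weight n ω k = maxWeight n ω := by
      obtain ⟨k, hk, hsup⟩ := exists_mem_eq_sup _ hne (weight n ω)
      exact ⟨k, hk, hsup.symm⟩
    obtain ⟨hk, hmax⟩ := Nat.find_spec hex
    have hleft : ∀ q ∈ misplacedZeros n ω, q < Nat.find hex →
        weight n ω q < weight n ω (Nat.find hex) := fun q hq hlt => by
      have := Nat.find_min hex hlt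
      have := hle q hq
      grind
    obtain ⟨k', hk', hge⟩ :=
      exists_mem_evolve_weight_ge hk (fun q hq => (hle q hq).trans hmax.ge) hleft (by omega)
    have : weight n (evolve n ω) k' ≤ maxWeight n (evolve n ω) := le_sup hk'
    omega

lemma maxWeight_iterate_evolve (m : ℕ) :
    maxWeight n ((evolve n)^[m] ω) = maxWeight n ω - m := by
  induction m with
  | zero => rfl
  | succ m ih => rw [Function.iterate_succ_apply', maxWeight_evolve, ih]; omega

theorem stabTime_eq_maxWeight : stabTime n ω = maxWeight n ω := by
  have : {m | IsStable n ((evolve n)^[m] ω)} = Set.Ici (maxWeight n ω) := by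
    ext m
    simp [isStable_iff_maxWeight_eq_zero, maxWeight_iterate_evolve, Nat.sub_eq_zero_iff_le]
  rw [stabTime, this, csInf_Ici]

lemma maxWeight_add_one_eq_sup_walk (hn : 0 < n) (h0 : bit n ω 0 = false)
    (h1 : bit n ω (n - 1) = true) :
    (maxWeight n ω : ℤ) + 1 =
      (Icc 1 n).sup' (nonempty_Icc.mpr hn) (walk n ω) + countOnes n ω n := by
  obtain ⟨t, ht, hMt⟩ := exists_mem_eq_sup' (s := Icc 1 n) (nonempty_Icc.mpr hn) (walk n ω)
  have ht' := mem_Icc.mp ht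
  have hM₁ : walk n ω 1 ≤ walk n ω t := hMt ▸ le_sup' _ (mem_Icc.mpr ⟨le_rfl, hn⟩)
  have hw₁ : walk n ω 1 = 1 := by simp [walk, h0]
  have hwt := walk_eq_sub_countOnes (ω := ω) t
  obtain ⟨q, hqt, hbq, hq⟩ := exists_bit_false_walk_le (ω := ω) (b := t) (by omega)
  have hqn : q + 1 ≤ n - 1 := by
    by_contra hqn
    rw [show q = n - 1 by omega, h1] at hbq
    exact Bool.noConfusion hbq
  have hcn := countOnes_succ (ω := ω) (n - 1)
  simp only [Nat.sub_add_cancel hn, h1, ite_true] at hcn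
  have hcq := countOnes_mono (ω := ω) hqn
  have hqW : q ∈ misplacedZeros n ω := mem_misplacedZeros.mpr ⟨hbq, by omega⟩
  obtain ⟨k, hk, hsup⟩ := exists_mem_eq_sup _ ⟨q, hqW⟩ (weight n ω)
  have hkn := mem_range.mp (mem_filter.mp hk).1
  have hMk : walk n ω (k + 1) ≤ (Icc 1 n).sup' (nonempty_Icc.mpr hn) (walk n ω) :=
    le_sup' _ (mem_Icc.mpr ⟨by omega, by omega⟩)
  have hwq : weight n ω q ≤ maxWeight n ω := le_sup hqW
  have := weight_eq_walk hbq
  have := weight_eq_walk (mem_misplacedZeros.mp hk).1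
  rw [maxWeight, hsup] at hwq ⊢
  omega

end

/-- For a string starting with 0 and ending with 1, the stabilization time
equals `n/2 + max_{1 ≤ k ≤ n} S_k - S_n/2 - 1`. -/
theorem stmt2 (n : ℕ) (hn : 0 < n) (ω : Fin n → Bool)
    (h0 : ω ⟨0, hn⟩ = false) (h1 : ω ⟨n - 1, Nat.sub_lt hn one_pos⟩ = true) :
    (stabTime n ω : ℚ) =
      (n : ℚ) / 2
        + (((Finset.Icc 1 n).sup' (Finset.nonempty_Icc.mpr hn) (walk n ω) : ℤ) : ℚ)
        - ((walk n ω n : ℤ) : ℚ) / 2 - 1 := by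
  have hb0 : bit n ω 0 = false := by rwa [bit, dif_pos hn]
  have hb1 : bit n ω (n - 1) = true := by rwa [bit, dif_pos (Nat.sub_lt hn one_pos)]
  have h := congrArg (Int.cast : ℤ → ℚ) (maxWeight_add_one_eq_sup_walk hn hb0 hb1)
  rw [stabTime_eq_maxWeight, walk_eq_sub_countOnes]
  push_cast at h ⊢
  linarith
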